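/- For every m ≥ 1, every word A^(m) = (A₁,…,A_m) ∈ 𝒜^m, and every x ∈ [0,1], the composed inverse branch satisfies |h_{A^(m)}'(x)| ≤ 4^{−m}. In particular, for every single digit (a,ε)_s ∈ 𝒜 and x ∈ [0,1], |h_{(a,ε)_s}'(x)| ≤ 1/4. -/

import Mathlib

open MeasureTheory Real Set Filter Topology

namespace SCF

/-- The involution `ι(x) = (1−x)/(1+x)`. -/
noncomputable def iota (x : ℝ) : ℝ := (1 - x) / (1 + x)

/-- Even continued-fraction step.  For `y ∈ (0,1/2]` one has
`⌊(1/y+1)/2⌋ = k` whenever `1/y ∈ (2k−1, 2k+1)`, so `Te y = |1/y − 2k|`;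
explicitly `Te y = 1/y − 2` on `[1/3,1/2]`, `Te y = 1/y − 2k` on
`[1/(2k+1), 1/(2k))` and `Te y = 2k − 1/y` on `[1/(2k), 1/(2k−1))` (`k ≥ 2`). -/
noncomputable def Te (y : ℝ) : ℝ := |1 / y - 2 * (⌊(1 / y + 1) / 2⌋ : ℝ)|

/-- The spliced continued fraction (SCF) map `T : [0,1] → [0,1]`, with
`T 0 = 0`, `T 1 = 1`.  On `(0,1/2]` it is the even continued fraction map
(see `Te`), and on `(1/2,1)` it is the odd–odd map, which is the conjugate
`ι ∘ Te ∘ ι` of the even map; this agrees with the branchwise definition: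
`T x = (k x − (k−1))/(k − (k+1) x)` on `((k−1)/k, (2k−1)/(2k+1)]` and
`T x = (k − (k+1) x)/(k x − (k−1))` on `((2k−1)/(2k+1), k/(k+1)]` for `k ≥ 2`. -/
noncomputable def T (x : ℝ) : ℝ :=
  if x ≤ 0 then 0
  else if 1 ≤ x then 1
  else if x ≤ 1 / 2 then Te x
  else iota (Te (iota x))

/-- Parity label of a digit: `e` (even cusp) or `o` (odd–odd cusp). -/
inductive Par | e | o
deriving DecidableEq

/-- A candidate SCF digit `(a, ε)_s`. -/
structure Digit where
  a : ℤ
  eps : ℤ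
  s : Par
deriving DecidableEq

/-- The digit set `𝒜 = {(k,ε)_s : k ≥ 2, ε = ±1, s ∈ {e,o}} ∪ {(1,+1)_e}`. -/
def Digit.Valid (d : Digit) : Prop :=
  (2 ≤ d.a ∧ (d.eps = 1 ∨ d.eps = -1)) ∨ (d.a = 1 ∧ d.eps = 1 ∧ d.s = Par.e)

/-- The branch intervals `I_{(a,ε)_s}` of the SCF map. -/
noncomputable def branch (d : Digit) : Set ℝ :=
  match d.s with
  | Par.e =>
      if d.a = 1 then Set.Icc (1/3 : ℝ) (1/2)
      else if d.eps = 1 then Set.Ico (1 / (2 * (d.a : ℝ) + 1)) (1 / (2 * (d.a : ℝ)))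
      else Set.Ico (1 / (2 * (d.a : ℝ))) (1 / (2 * (d.a : ℝ) - 1))
  | Par.o =>
      if d.eps = 1 then
        Set.Ioc ((2 * (d.a : ℝ) - 1) / (2 * (d.a : ℝ) + 1)) ((d.a : ℝ) / ((d.a : ℝ) + 1))
      else
        Set.Ioc (((d.a : ℝ) - 1) / (d.a : ℝ)) ((2 * (d.a : ℝ) - 1) / (2 * (d.a : ℝ) + 1))

open Classical in
/-- The SCF digit of a point `y` (the unique valid digit `d` with `y ∈ I_d`;
well defined for every `y ∈ (0,1)`). -/
noncomputable def digit (y : ℝ) : Digit :=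
  if h : ∃ d : Digit, d.Valid ∧ y ∈ branch d then h.choose else ⟨1, 1, Par.e⟩

/-- The `n`-th SCF digit `(a_n(x), ε_n(x))_{s_n(x)}` of `x`, `n ≥ 1`,
determined by `T^[n−1] x ∈ I_{(a_n,ε_n)_{s_n}}`. -/
noncomputable def dig (n : ℕ) (x : ℝ) : Digit := digit (T^[n - 1] x)

/-- The `n`-th SCF partial quotient `a_n(x)`. -/
noncomputable def a (n : ℕ) (x : ℝ) : ℤ := (dig n x).a

/-- The invariant density `f_μ`. -/
noncomputable def fdens (x : ℝ) : ℝ :=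
  2 / (Real.log (2 + Real.sqrt 3) * (1 - (2 - Real.sqrt 3) * x) * (1 + Real.sqrt 3 * x))

/-- The absolutely continuous `T`-invariant probability measure `μ` on `(0,1)`. -/
noncomputable def mu : Measure ℝ :=
  (volume.restrict (Set.Ioo (0 : ℝ) 1)).withDensity fun x => ENNReal.ofReal (fdens x)

/-- The inverse branches `h_{(a,ε)_s}` of the SCF map `T`. -/
noncomputable def h (d : Digit) (x : ℝ) : ℝ :=
  match d.s with
  | Par.e => 1 / (2 * (d.a : ℝ) + (d.eps : ℝ) * x)
  | Par.o =>
      if d.eps = 1 then (((d.a : ℝ) - 1) * x + (d.a : ℝ)) / ((d.a : ℝ) * x + ((d.a : ℝ) + 1))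
      else ((d.a : ℝ) * x + ((d.a : ℝ) - 1)) / (((d.a : ℝ) + 1) * x + (d.a : ℝ))

/-- Composed inverse branch `h_{A^{(n)}} = h_{A₁} ∘ ⋯ ∘ h_{A_n}` of a word. -/
noncomputable def hWord (l : List Digit) : ℝ → ℝ :=
  l.foldr (fun d g => h d ∘ g) id

/-- The dual inverse branches `bar h_{(b,η)_t}`. -/
noncomputable def hbar (d : Digit) (y : ℝ) : ℝ :=
  match d.s with
  | Par.e => (d.eps : ℝ) / (2 * (d.a : ℝ) + y)
  | Par.o =>
      1 / (1 + (d.eps : ℝ) / (((d.a : ℝ) - ((max 0 d.eps : ℤ) : ℝ)) + 1 / (1 + y)))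

/-- The matrix `M_{(a,ε)_s}` associated with the inverse branch `h_{(a,ε)_s}`. -/
noncomputable def Mdig (d : Digit) : Matrix (Fin 2) (Fin 2) ℝ :=
  match d.s with
  | Par.e => !![0, 1; (d.eps : ℝ), 2 * (d.a : ℝ)]
  | Par.o =>
      !![(d.a : ℝ) - ((max 0 d.eps : ℤ) : ℝ), (d.a : ℝ) - ((max 0 d.eps : ℤ) : ℝ) + (d.eps : ℝ);
         (d.a : ℝ) - ((max 0 d.eps : ℤ) : ℝ) + 1, (d.a : ℝ) - ((max 0 d.eps : ℤ) : ℝ) + (d.eps : ℝ) + 1]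

/-- `M_n(x) = M_{(a₁,ε₁)_{s₁}} ⋯ M_{(a_n,ε_n)_{s_n}}`. -/
noncomputable def Mn (n : ℕ) (x : ℝ) : Matrix (Fin 2) (Fin 2) ℝ :=
  ((List.range n).map fun i => Mdig (digit (T^[i] x))).prod

/-- `P_n(x)`: the `(1,2)`-entry of `M_n(x)` (numerator of the `n`-th convergent). -/
noncomputable def Pc (n : ℕ) (x : ℝ) : ℝ := Mn n x 0 1

/-- `Q_n(x)`: the `(2,2)`-entry of `M_n(x)` (denominator of the `n`-th convergent). -/
noncomputable def Qc (n : ℕ) (x : ℝ) : ℝ := Mn n x 1 1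

/-!
Every inverse branch `h d` is the Möbius map of the matrix `Mdig d`, whose determinant is
`-ε = ±1`, so `|(h d)' x| = 1 / (r x + s)²` with `r x + s` its denominator. For a valid digit that
denominator is at least `2` on `[0,1]`, giving `|(h d)'| ≤ 1/4`, and `h d` maps `[0,1]` into
itself, so the chain rule along a word multiplies these bounds.
-/

end SCF

theorem mapsTo_foldr_comp {ι : Type*} {α : Type*} (f : ι → α → α) {s : Set α} (l : List ι)
    (hmaps : ∀ i ∈ l, MapsTo (f i) s s) : MapsTo (l.foldr (fun i g => f i ∘ g) id) s s := by
  induction l with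
  | nil => exact mapsTo_id s
  | cons i l ih =>
    exact (hmaps i List.mem_cons_self).comp (ih fun j hj => hmaps j (List.mem_cons_of_mem _ hj))

theorem abs_deriv_foldr_comp_le {ι : Type*} (f : ι → ℝ → ℝ) {s : Set ℝ} {c : ℝ} (l : List ι)
    (hmaps : ∀ i ∈ l, MapsTo (f i) s s)
    (hdiff : ∀ i ∈ l, ∀ x ∈ s, DifferentiableAt ℝ (f i) x)
    (hbound : ∀ i ∈ l, ∀ x ∈ s, |deriv (f i) x| ≤ c) {x : ℝ} (hx : x ∈ s) :
    DifferentiableAt ℝ (l.foldr (fun i g => f i ∘ g) id) x ∧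
      |deriv (l.foldr (fun i g => f i ∘ g) id) x| ≤ c ^ l.length := by
  induction l with
  | nil => simp
  | cons i l ih =>
    have htail : ∀ j ∈ l, j ∈ i :: l := fun j hj => List.mem_cons_of_mem _ hj
    set g := l.foldr (fun i g => f i ∘ g) id
    obtain ⟨hg, hg'⟩ := ih (fun j hj => hmaps j (htail j hj)) (fun j hj => hdiff j (htail j hj))
      (fun j hj => hbound j (htail j hj))
    have hgx : g x ∈ s := mapsTo_foldr_comp f l (fun j hj => hmaps j (htail j hj)) hx
    have hfi := hdiff i List.mem_cons_self (g x) hgx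
    have hfi' := hbound i List.mem_cons_self (g x) hgx
    refine ⟨hfi.comp x hg, ?_⟩
    rw [List.foldr_cons, deriv_comp x hfi hg, abs_mul, List.length_cons, pow_succ']
    exact mul_le_mul hfi' hg' (abs_nonneg _) ((abs_nonneg _).trans hfi')

noncomputable def mobius (M : Matrix (Fin 2) (Fin 2) ℝ) (x : ℝ) : ℝ :=
  (M 0 0 * x + M 0 1) / (M 1 0 * x + M 1 1)

theorem hasDerivAt_mobius (M : Matrix (Fin 2) (Fin 2) ℝ) {x : ℝ}
    (hx : M 1 0 * x + M 1 1 ≠ 0) :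
    HasDerivAt (mobius M) (M.det / (M 1 0 * x + M 1 1) ^ 2) x := by
  have hnum : HasDerivAt (fun y => M 0 0 * y + M 0 1) (M 0 0) x := by
    simpa using ((hasDerivAt_id x).const_mul (M 0 0)).add_const (M 0 1)
  have hden : HasDerivAt (fun y => M 1 0 * y + M 1 1) (M 1 0) x := by
    simpa using ((hasDerivAt_id x).const_mul (M 1 0)).add_const (M 1 1)
  rw [show M.det = M 0 0 * (M 1 0 * x + M 1 1) - (M 0 0 * x + M 0 1) * M 1 0 by
    rw [Matrix.det_fin_two]; ring]
  exact hnum.div hden hx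

namespace SCF

theorem Digit.Valid.eps_eq_one_or_neg_one {d : Digit} (hd : d.Valid) :
    d.eps = 1 ∨ d.eps = -1 := by
  rcases hd with ⟨-, h⟩ | ⟨-, h, -⟩
  exacts [h, Or.inl h]

theorem h_eq_mobius {d : Digit} (hd : d.eps = 1 ∨ d.eps = -1) : h d = mobius (Mdig d) := by
  obtain ⟨a, eps, s⟩ := d
  funext x
  cases s <;> rcases hd with rfl | rfl <;> simp [h, mobius, Mdig] <;> ring

theorem det_Mdig (d : Digit) : (Mdig d).det = -d.eps := by
  obtain ⟨a, eps, s⟩ := d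
  cases s
  · simp [Mdig, Matrix.det_fin_two]
  · simp [Mdig, Matrix.det_fin_two]
    ring

theorem Digit.Valid.mobius_bounds {d : Digit} (hd : d.Valid) {x : ℝ} (hx : x ∈ Icc (0 : ℝ) 1) :
    2 ≤ Mdig d 1 0 * x + Mdig d 1 1 ∧ 0 ≤ Mdig d 0 0 * x + Mdig d 0 1 ∧
      Mdig d 0 0 * x + Mdig d 0 1 ≤ Mdig d 1 0 * x + Mdig d 1 1 := by
  obtain ⟨hx0, hx1⟩ := hx
  obtain ⟨a, eps, s⟩ := d
  rcases hd with ⟨ha, heps⟩ | ⟨rfl, rfl, rfl⟩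
  · have ha' : (2 : ℝ) ≤ a := by exact_mod_cast ha
    cases s <;> rcases heps with rfl | rfl <;> refine ⟨?_, ?_, ?_⟩ <;> simp [Mdig] <;> nlinarith
  · refine ⟨?_, ?_, ?_⟩ <;> simp [Mdig] <;> linarith

theorem Digit.Valid.mapsTo_h {d : Digit} (hd : d.Valid) : MapsTo (h d) (Icc 0 1) (Icc 0 1) := by
  intro x hx
  obtain ⟨hden, hnum, hle⟩ := hd.mobius_bounds hx
  rw [h_eq_mobius hd.eps_eq_one_or_neg_one, mobius]
  exact ⟨div_nonneg hnum (by linarith), div_le_one_of_le₀ hle (by linarith)⟩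

theorem Digit.Valid.hasDerivAt_h {d : Digit} (hd : d.Valid) {x : ℝ} (hx : x ∈ Icc (0 : ℝ) 1) :
    HasDerivAt (h d) (-d.eps / (Mdig d 1 0 * x + Mdig d 1 1) ^ 2) x := by
  rw [h_eq_mobius hd.eps_eq_one_or_neg_one, ← det_Mdig]
  exact hasDerivAt_mobius _ (by linarith [(hd.mobius_bounds hx).1])

theorem Digit.Valid.abs_deriv_h_le {d : Digit} (hd : d.Valid) {x : ℝ} (hx : x ∈ Icc (0 : ℝ) 1) :
    |deriv (h d) x| ≤ 1 / 4 := by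
  have hden := (hd.mobius_bounds hx).1
  have heps : |(d.eps : ℝ)| = 1 := by
    rcases hd.eps_eq_one_or_neg_one with h | h <;> simp [h]
  rw [(hd.hasDerivAt_h hx).deriv, abs_div, abs_neg, heps, abs_of_nonneg (sq_nonneg _)]
  exact one_div_le_one_div_of_le (by norm_num) (by nlinarith)

/-- uniform contraction `|h_{A^{(m)}}'| ≤ 4^{−m}` on `[0,1]`;
in particular every single inverse branch has `|h'| ≤ 1/4`. -/
theorem uniform_contraction :
    (∀ l : List Digit, l ≠ [] → (∀ d ∈ l, d.Valid) →
      ∀ x ∈ Set.Icc (0 : ℝ) 1, |deriv (hWord l) x| ≤ (1/4 : ℝ) ^ l.length) ∧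
    (∀ d : Digit, d.Valid →
      ∀ x ∈ Set.Icc (0 : ℝ) 1, |deriv (h d) x| ≤ 1/4) := by
  refine ⟨fun l _ hl x hx => ?_, fun d hd x hx => hd.abs_deriv_h_le hx⟩
  exact (abs_deriv_foldr_comp_le h l (fun d hd => (hl d hd).mapsTo_h)
    (fun d hd _ hx => ((hl d hd).hasDerivAt_h hx).differentiableAt)
    (fun d hd _ hx => (hl d hd).abs_deriv_h_le hx) hx).2

end SCF
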